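/- Along any classical closed-loop trajectory x(t) of ẋ = A₁(x)u₁ + A₂(x)u₂ with the feedback K(x) = (1,0) if x₃ ≥ 0 and M₁(x) = 1, K(x) = (−1,0) if x₃ < 0 and M₁(x) = 1, K(x) = (0,1) if M₁(x) < 1, the following decay holds at every point where x₂ ≠ 0, x₃ ≠ 0, M₁(x) = 1 and x ∉ {±q}: d/dt V(x(t)) ≤ −√(1 − (x(t)·q)²); moreover along closed-loop trajectories in {x₂ = 0, x₃ ≠ 0} one has d/dt V(x(t)) = −(1 + π/2)√(1 − x₃(t)²), and every closed-loop trajectory x(t) starting in M₁⁻¹(1) satisfies V(x(t)) − V(x(0)) ≤ −∫₀ᵗ √(1 − x₃(s)²) ds. -/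

import Mathlib

open Set MeasureTheory Metric Filter Manifold

noncomputable section
open scoped Classical

/-- Euclidean 3-space. -/
abbrev E3 := EuclideanSpace ℝ (Fin 3)

/-- The unit sphere `S² ⊆ ℝ³`. -/
def S2 : Set E3 := Metric.sphere 0 1

/-- `q = (0,0,1)`. -/
def qv : E3 := EuclideanSpace.single (2 : Fin 3) (1 : ℝ)

/-- `r = (0,1,0)`. -/
def rv : E3 := EuclideanSpace.single (1 : Fin 3) (1 : ℝ)

/-- Geodesic distance on `S²`: `G(x,x') = arccos (x ⬝ x')`. -/
def geo (x y : E3) : ℝ := Real.arccos (inner ℝ x y)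

/-- `V_q(x) = min {G(x,q), G(x,-q)}`, the geodesic distance to `A = {±q}`. -/
def Vq (x : E3) : ℝ := min (geo x qv) (geo x (-qv))

/-- `V_r(x) = max {G(x,r), G(x,-r)}`. -/
def Vr (x : E3) : ℝ := max (geo x rv) (geo x (-rv))

/-- The Lyapunov function `V(x) = V_q(x)(1 + V_r(x))`. -/
def Vlyap (x : E3) : ℝ := Vq x * (1 + Vr x)

/-- Cross product on `ℝ³`. -/
def cross3 (x y : E3) : E3 :=
  (WithLp.equiv 2 (Fin 3 → ℝ)).symm
    (crossProduct ((WithLp.equiv 2 (Fin 3 → ℝ)) x) ((WithLp.equiv 2 (Fin 3 → ℝ)) y))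

/-- `B₁(x) = q - (x⬝q) x`. -/
def B1 (x : E3) : E3 := qv - (inner ℝ x qv : ℝ) • x

/-- `B₂(x) = x × q`. -/
def B2 (x : E3) : E3 := cross3 x qv

/-- `A₁ = M₁ B₁`. -/
def A1 (M₁ : E3 → ℝ) (x : E3) : E3 := M₁ x • B1 x

/-- The attractor `A = {q, -q}`. -/
def attrA : Set E3 := {qv, -qv}

/-- The standing hypotheses on the smooth cutoff `M₁ : S² → [0,1]`. -/
structure M1Hyp (M₁ : E3 → ℝ) : Prop where
  smooth : ContMDiff (𝓡 2) 𝓘(ℝ, ℝ) (⊤ : ℕ∞) (fun p : Metric.sphere (0 : E3) 1 => M₁ ↑p)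
  mem_Icc : ∀ x ∈ S2, M₁ x ∈ Icc (0 : ℝ) 1
  zero_iff : ∀ x ∈ S2,
    (M₁ x = 0 ↔ x 0 / 4 ≤ x 1 ∧ x 1 ≤ 3 * x 0 / 4 ∧ Real.pi / 4 ≤ Vq x)
  one_of : ∀ x ∈ S2,
    (7 * x 0 / 8 ≤ x 1 ∨ x 1 ≤ x 0 / 8 ∨ Vq x ≤ Real.pi / 8) → M₁ x = 1

/-- A control with values in `ℝ²`: measurable and locally essentially bounded. -/
def IsControl2 (u : ℝ → ℝ × ℝ) : Prop :=
  Measurable u ∧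
  ∀ T > (0 : ℝ), ∃ C, ∀ᵐ t ∂(volume.restrict (Icc (0 : ℝ) T)), ‖u t‖ ≤ C

/-- An (open-loop, globally defined) trajectory of `ẋ = A₁(x)u₁ + A₂(x)u₂` on `S²`. -/
def SphereTraj (M₁ : E3 → ℝ) (u : ℝ → ℝ × ℝ) (x : ℝ → E3) : Prop :=
  ContinuousOn x (Ici 0) ∧ (∀ t, 0 ≤ t → x t ∈ S2) ∧
  ∀ᵐ t ∂(volume.restrict (Ici (0 : ℝ))),
    HasDerivAt x ((u t).1 • A1 M₁ (x t) + (u t).2 • B2 (x t)) t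

/-- The family of relatively open precompact subsets of `S²` containing `A`. -/
def PNS (A : Set E3) : Set (Set E3) :=
  {O | A ⊆ O ∧ O ⊆ S2 ∧ (∃ V, IsOpen V ∧ O = V ∩ S2) ∧ IsCompact (closure O)}

/-- The discontinuous stabilizing feedback `K`. -/
def Kfb (M₁ : E3 → ℝ) (x : E3) : ℝ × ℝ :=
  if M₁ x = 1 then (if 0 ≤ x 2 then (1, 0) else (-1, 0)) else (0, 1)

/-- A (classical, forward-time) solution of the closed-loop system
`ẋ = A₁(x)K₁(x) + A₂(x)K₂(x)` on `S²`. -/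
def ClosedLoopSol (M₁ : E3 → ℝ) (kfb : E3 → ℝ × ℝ) (x : ℝ → E3) : Prop :=
  (∀ t, 0 ≤ t → x t ∈ S2) ∧
  ∀ t, 0 ≤ t →
    HasDerivWithinAt x
      ((kfb (x t)).1 • A1 M₁ (x t) + (kfb (x t)).2 • B2 (x t)) (Ici 0) t

/-! On `M₁⁻¹(1)` the feedback moves `x` along a meridian towards the nearer pole:
`x₃' = ±(1 - x₃²)` and `x₂' = -|x₃| x₂`. Since `V_q = arccos |x₃|` and `V_r = π - arccos |x₂|`,
`V_q` decreases at rate `√(1 - x₃²)` while `V_r` does not increase, and the product rule gives the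
pointwise bound. Off `M₁⁻¹(1)` we have `x₃' = 0`, so `x₃'` only takes the values `0` and
`±(1 - x₃²)`; as `x₃²` is nondecreasing, on `[0, t]` the latter stay away from `0` unless `x(t)` is
a pole, and by Darboux's theorem a derivative cannot jump across such a gap. Hence trajectories
starting in `M₁⁻¹(1)` stay there. Right derivatives then give
`V_q(x(t)) = V_q(x(0)) - ∫₀ᵗ √(1 - x₃²)` (also through times spent at a pole, where `arccos` is not
differentiable), which yields the integral estimate and, when `x₂ ≡ 0` so that `V_r ≡ π/2`, the
exact derivative. -/

open scoped Topology

def signNonneg (a : ℝ) : ℝ := if 0 ≤ a then 1 else -1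

lemma signNonneg_mul_self (a : ℝ) : signNonneg a * a = |a| := by
  unfold signNonneg
  split_ifs with h
  · rw [one_mul, abs_of_nonneg h]
  · rw [neg_one_mul, abs_of_neg (not_le.1 h)]

lemma signNonneg_mul_signNonneg (a : ℝ) : signNonneg a * signNonneg a = 1 := by
  unfold signNonneg; split_ifs <;> norm_num

lemma abs_signNonneg (a : ℝ) : |signNonneg a| = 1 := by
  unfold signNonneg; split_ifs <;> norm_num

lemma signNonneg_ne_zero (a : ℝ) : signNonneg a ≠ 0 := by
  unfold signNonneg; split_ifs <;> norm_num

lemma Real.min_arccos_arccos_neg (a : ℝ) :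
    min (Real.arccos a) (Real.arccos (-a)) = Real.arccos |a| := by
  rcases le_total 0 a with h | h
  · rw [abs_of_nonneg h, min_eq_left (Real.arccos_le_arccos (by linarith))]
  · rw [abs_of_nonpos h, min_eq_right (Real.arccos_le_arccos (by linarith))]

lemma Real.max_arccos_arccos_neg (a : ℝ) :
    max (Real.arccos a) (Real.arccos (-a)) = Real.pi - Real.arccos |a| := by
  rcases le_total 0 a with h | h
  · rw [abs_of_nonneg h, max_eq_right (Real.arccos_le_arccos (by linarith)), Real.arccos_neg]
  · rw [abs_of_nonpos h, max_eq_left (Real.arccos_le_arccos (by linarith)), ← Real.arccos_neg,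
      neg_neg]

lemma eventually_abs_eq_signNonneg_mul {f : ℝ → ℝ} {S : Set ℝ} {t : ℝ}
    (hf : ContinuousWithinAt f S t) (ht : f t ≠ 0) :
    ∀ᶠ s in 𝓝[S] t, |f s| = signNonneg (f t) * f s := by
  rcases ht.lt_or_gt with hneg | hpos
  · filter_upwards [hf.eventually (eventually_lt_nhds hneg)] with s hs
    simp [signNonneg, hneg.not_ge, abs_of_neg hs]
  · filter_upwards [hf.eventually (eventually_gt_nhds hpos)] with s hs
    simp [signNonneg, hpos.le, abs_of_pos hs]

lemma HasDerivWithinAt.eventually_nhdsGE_le {f : ℝ → ℝ} {d t : ℝ}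
    (hf : HasDerivWithinAt f d (Ici t) t) (hd : 0 < d) : ∀ᶠ s in 𝓝[≥] t, f t ≤ f s := by
  have hslope : ∀ᶠ s in 𝓝[>] t, 0 < slope f t s :=
    (hasDerivWithinAt_iff_tendsto_slope' (lt_irrefl t)).1 hf.Ioi_of_Ici (eventually_gt_nhds hd)
  rw [← Ioi_insert, nhdsWithin_insert, eventually_sup, eventually_pure]
  refine ⟨le_rfl, ?_⟩
  filter_upwards [hslope, self_mem_nhdsWithin] with s hs hts
  rw [slope_def_field] at hs
  exact sub_nonneg.1 ((div_pos_iff_of_pos_right (sub_pos.2 hts)).1 hs).le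

lemma HasDerivWithinAt.arccos_abs {f : ℝ → ℝ} {S : Set ℝ} {c d t : ℝ}
    (hf : HasDerivWithinAt f d S t) (hc : ∀ᶠ s in 𝓝[S] t, |f s| = c * f s)
    (hct : |f t| = c * f t) (h1 : |f t| < 1) :
    HasDerivWithinAt (fun s => Real.arccos |f s|) (-(c * d) / √(1 - f t ^ 2)) S t := by
  have hne : c * f t ≠ -1 ∧ c * f t ≠ 1 := by
    constructor <;> intro h <;> rw [← hct] at h <;> linarith [abs_nonneg (f t)]
  have h := (Real.hasDerivAt_arccos hne.1 hne.2).comp_hasDerivWithinAt t (hf.const_mul c)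
  have hsq : (c * f t) ^ 2 = f t ^ 2 := by rw [← hct, sq_abs]
  refine (h.congr_of_eventuallyEq (hc.mono fun s hs => by simp [hs]) (by simp [hct])).congr_deriv ?_
  rw [hsq]; ring

lemma ContinuousOn.hasDerivWithinAt_integral_Ici {E : Type*} [NormedAddCommGroup E]
    [NormedSpace ℝ E] [CompleteSpace E] {f : ℝ → E} {a t : ℝ} (hf : ContinuousOn f (Ici a))
    (ht : a ≤ t) : HasDerivWithinAt (fun u => ∫ s in a..u, f s) (f t) (Ici a) t := by
  have hg : Continuous fun s => f (max s a) :=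
    hf.comp_continuous (continuous_id.max continuous_const) fun s => le_max_right s a
  have hext : ∀ u ∈ Ici a, ∫ s in a..u, f s = ∫ s in a..u, f (max s a) := fun u hu =>
    intervalIntegral.integral_congr fun s hs => by
      rw [uIcc_of_le hu] at hs; simp [max_eq_left hs.1]
  have h := (hg.integral_hasStrictDerivAt a t).hasDerivAt.hasDerivWithinAt (s := Ici a)
  rw [max_eq_left ht] at h
  exact h.congr hext (hext t ht)

lemma hasDerivWithinAt_ne_zero_of_gap {f f' : ℝ → ℝ} {a b c : ℝ} (hab : a ≤ b)
    (hf : ∀ s ∈ Icc a b, HasDerivWithinAt f (f' s) (Icc a b) s) (hc : 0 < c)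
    (hgap : ∀ s ∈ Icc a b, f' s = 0 ∨ c ≤ |f' s|) (ha : f' a ≠ 0) : f' b ≠ 0 := by
  intro hb
  have hne : ∀ m, m ≠ 0 → |m| < c → ∀ s ∈ Icc a b, f' s ≠ m := by
    intro m hm hmc s hs hsm
    rcases hgap s hs with h | h <;> rw [hsm] at h
    · exact hm h
    · linarith
  have hmem_a : a ∈ Icc a b := left_mem_Icc.2 hab
  have hmem_b : b ∈ Icc a b := right_mem_Icc.2 hab
  have hup := hasDerivWithinAt_forall_lt_or_forall_gt_of_forall_ne (convex_Icc a b) hf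
    (hne (c / 2) (by positivity) (by rw [abs_of_pos (by positivity)]; linarith))
  have hlow := hasDerivWithinAt_forall_lt_or_forall_gt_of_forall_ne (convex_Icc a b) hf
    (hne (-(c / 2)) (by simp; positivity) (by rw [abs_neg, abs_of_pos (by positivity)]; linarith))
  have hlt : f' a < c / 2 :=
    hup.resolve_right (fun h => by linarith [h b hmem_b]) a hmem_a
  have hgt : -(c / 2) < f' a :=
    hlow.resolve_left (fun h => by linarith [h b hmem_b]) a hmem_a
  rcases hgap a hmem_a with h | h
  · exact ha h
  · linarith [abs_lt.2 ⟨hgt, hlt⟩]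

lemma monotoneOn_sq_of_hasDerivWithinAt {f f' : ℝ → ℝ} {D : Set ℝ} (hD : Convex ℝ D)
    (hf : ∀ t ∈ D, HasDerivWithinAt f (f' t) D t) (hf' : ∀ t ∈ interior D, 0 ≤ f t * f' t) :
    MonotoneOn (fun t => f t ^ 2) D := by
  refine monotoneOn_of_hasDerivWithinAt_nonneg hD (f' := fun t => 2 * (f t * f' t))
    (fun t ht => ((hf t ht).continuousWithinAt).pow 2) (fun t ht => ?_)
    (fun t ht => by have := hf' t ht; positivity)
  refine (((hf t (interior_subset ht)).pow 2).mono interior_subset).congr_deriv ?_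
  push_cast; ring

lemma antitoneOn_sq_of_hasDerivWithinAt {f f' : ℝ → ℝ} {D : Set ℝ} (hD : Convex ℝ D)
    (hf : ∀ t ∈ D, HasDerivWithinAt f (f' t) D t) (hf' : ∀ t ∈ interior D, f t * f' t ≤ 0) :
    AntitoneOn (fun t => f t ^ 2) D := by
  refine antitoneOn_of_hasDerivWithinAt_nonpos hD (f' := fun t => 2 * (f t * f' t))
    (fun t ht => ((hf t ht).continuousWithinAt).pow 2) (fun t ht => ?_)
    (fun t ht => by linarith [hf' t ht])
  refine (((hf t (interior_subset ht)).pow 2).mono interior_subset).congr_deriv ?_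
  push_cast; ring

lemma inner_qv (y : E3) : inner ℝ y qv = y 2 := by
  simp [qv, EuclideanSpace.inner_single_right]

lemma inner_rv (y : E3) : inner ℝ y rv = y 1 := by
  simp [rv, EuclideanSpace.inner_single_right]

lemma Vq_eq (y : E3) : Vq y = Real.arccos |y 2| := by
  rw [Vq, geo, geo, inner_neg_right, inner_qv, Real.min_arccos_arccos_neg]

lemma Vr_eq (y : E3) : Vr y = Real.pi - Real.arccos |y 1| := by
  rw [Vr, geo, geo, inner_neg_right, inner_rv, Real.max_arccos_arccos_neg]

lemma Vq_nonneg (y : E3) : 0 ≤ Vq y := by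
  rw [Vq_eq]; exact Real.arccos_nonneg _

lemma Vr_nonneg (y : E3) : 0 ≤ Vr y := by
  rw [Vr_eq]; exact sub_nonneg.2 (Real.arccos_le_pi _)

lemma Vq_eq_zero_of_sq_eq_one {y : E3} (h : y 2 ^ 2 = 1) : Vq y = 0 := by
  have habs : |y 2| = 1 :=
    (pow_left_inj₀ (abs_nonneg _) zero_le_one two_ne_zero).1 (by rw [sq_abs, h, one_pow])
  rw [Vq_eq, habs, Real.arccos_one]

lemma sum_sq_of_mem_S2 {y : E3} (hy : y ∈ S2) : y 0 ^ 2 + y 1 ^ 2 + y 2 ^ 2 = 1 := by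
  have h : ‖y‖ ^ 2 = 1 := by rw [mem_sphere_zero_iff_norm.1 hy, one_pow]
  simpa [EuclideanSpace.norm_sq_eq, Fin.sum_univ_three, add_assoc] using h

lemma sq_le_one_of_mem_S2 {y : E3} (hy : y ∈ S2) (i : Fin 3) : y i ^ 2 ≤ 1 := by
  have := sum_sq_of_mem_S2 hy
  fin_cases i <;> dsimp only [Fin.zero_eta, Fin.mk_one, Fin.reduceFinMk] <;>
    nlinarith [sq_nonneg (y 0), sq_nonneg (y 1), sq_nonneg (y 2)]

lemma qv_apply_one : qv 1 = 0 := by simp [qv]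

lemma qv_apply_two : qv 2 = 1 := by simp [qv]

lemma B1_apply (y : E3) (i : Fin 3) : B1 y i = qv i - y 2 * y i := by
  simp [B1, inner_qv]

lemma B2_apply_two (y : E3) : B2 y 2 = 0 := by
  simp [B2, cross3, cross_apply, qv]

def closedLoopField (M₁ : E3 → ℝ) (y : E3) : E3 :=
  (Kfb M₁ y).1 • A1 M₁ y + (Kfb M₁ y).2 • B2 y

section closedLoopField

variable {M₁ : E3 → ℝ} {y : E3}

lemma closedLoopField_of_eq_one (h : M₁ y = 1) :
    closedLoopField M₁ y = signNonneg (y 2) • B1 y := by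
  simp only [closedLoopField, Kfb, A1, h, if_true, one_smul, signNonneg]
  split_ifs <;> simp

lemma closedLoopField_of_ne_one (h : M₁ y ≠ 1) : closedLoopField M₁ y = B2 y := by
  simp [closedLoopField, Kfb, h]

lemma closedLoopField_apply_two_of_eq_one (h : M₁ y = 1) :
    closedLoopField M₁ y 2 = signNonneg (y 2) * (1 - y 2 ^ 2) := by
  rw [closedLoopField_of_eq_one h, PiLp.smul_apply, smul_eq_mul, B1_apply, qv_apply_two, sq]

lemma closedLoopField_apply_one_of_eq_one (h : M₁ y = 1) :
    closedLoopField M₁ y 1 = -(|y 2| * y 1) := by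
  rw [closedLoopField_of_eq_one h, PiLp.smul_apply, smul_eq_mul, B1_apply, qv_apply_one,
    ← signNonneg_mul_self]
  ring

lemma closedLoopField_apply_two_of_ne_one (h : M₁ y ≠ 1) : closedLoopField M₁ y 2 = 0 := by
  rw [closedLoopField_of_ne_one h, B2_apply_two]

end closedLoopField

lemma M1Hyp.eq_one_of_sq_apply_two_eq_one {M₁ : E3 → ℝ} (hM₁ : M1Hyp M₁) {y : E3}
    (hy : y ∈ S2) (h : y 2 ^ 2 = 1) : M₁ y = 1 :=
  hM₁.one_of y hy (Or.inr (Or.inr (by rw [Vq_eq_zero_of_sq_eq_one h]; positivity)))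

lemma M1Hyp.eq_one_of_apply_one_eq_zero {M₁ : E3 → ℝ} (hM₁ : M1Hyp M₁) {y : E3}
    (hy : y ∈ S2) (h : y 1 = 0) : M₁ y = 1 := by
  refine hM₁.one_of y hy ?_
  rw [h]
  rcases le_total 0 (y 0) with h0 | h0
  · exact Or.inr (Or.inl (by positivity))
  · exact Or.inl (by linarith)

namespace ClosedLoopSol

variable {M₁ : E3 → ℝ} {x : ℝ → E3} {t : ℝ}

lemma hasDerivWithinAt_apply (hx : ClosedLoopSol M₁ (Kfb M₁) x) (i : Fin 3) (ht : 0 ≤ t) :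
    HasDerivWithinAt (fun s => x s i) (closedLoopField M₁ (x t) i) (Ici 0) t :=
  (EuclideanSpace.proj (𝕜 := ℝ) i).hasFDerivAt.comp_hasDerivWithinAt t (hx.2 t ht)

lemma continuousOn_apply (hx : ClosedLoopSol M₁ (Kfb M₁) x) (i : Fin 3) :
    ContinuousOn (fun s => x s i) (Ici 0) :=
  fun _ ht => (hx.hasDerivWithinAt_apply i ht).continuousWithinAt

lemma monotoneOn_sq_apply_two (hx : ClosedLoopSol M₁ (Kfb M₁) x) :
    MonotoneOn (fun s => x s 2 ^ 2) (Ici 0) := by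
  refine monotoneOn_sq_of_hasDerivWithinAt (convex_Ici 0)
    (fun s hs => hx.hasDerivWithinAt_apply 2 hs) (fun s hs => ?_)
  by_cases hM : M₁ (x s) = 1
  · have := sq_le_one_of_mem_S2 (hx.1 s (interior_subset hs)) 2
    rw [closedLoopField_apply_two_of_eq_one hM, ← mul_assoc, mul_comm (x s 2),
      signNonneg_mul_self]
    exact mul_nonneg (abs_nonneg _) (by linarith)
  · rw [closedLoopField_apply_two_of_ne_one hM, mul_zero]

lemma antitoneOn_sq_apply_one (hx : ClosedLoopSol M₁ (Kfb M₁) x)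
    (hall : ∀ s, 0 ≤ s → M₁ (x s) = 1) : AntitoneOn (fun s => x s 1 ^ 2) (Ici 0) := by
  refine antitoneOn_sq_of_hasDerivWithinAt (convex_Ici 0)
    (fun s hs => hx.hasDerivWithinAt_apply 1 hs) (fun s hs => ?_)
  rw [closedLoopField_apply_one_of_eq_one (hall s (interior_subset hs))]
  nlinarith [abs_nonneg (x s 2), sq_nonneg (x s 1)]

theorem M₁_eq_one (hM₁ : M1Hyp M₁) (hx : ClosedLoopSol M₁ (Kfb M₁) x) (h0 : M₁ (x 0) = 1)
    (ht : 0 ≤ t) : M₁ (x t) = 1 := by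
  by_contra hne
  have hc : 0 < 1 - x t 2 ^ 2 := sub_pos.2 <| (sq_le_one_of_mem_S2 (hx.1 t ht) 2).lt_of_ne
    fun h => hne (hM₁.eq_one_of_sq_apply_two_eq_one (hx.1 t ht) h)
  -- `x₃'` is `0` off `M₁⁻¹(1)` and `±(1 - x₃²)` on it, and `x₃²` is nondecreasing
  have hgap : ∀ s ∈ Icc 0 t, closedLoopField M₁ (x s) 2 = 0 ∨
      1 - x t 2 ^ 2 ≤ |closedLoopField M₁ (x s) 2| := by
    intro s hs
    by_cases hM : M₁ (x s) = 1
    · have hmono := hx.monotoneOn_sq_apply_two hs.1 ht hs.2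
      have := sq_le_one_of_mem_S2 (hx.1 s hs.1) 2
      rw [closedLoopField_apply_two_of_eq_one hM, abs_mul, abs_signNonneg, one_mul,
        abs_of_nonneg (by linarith)]
      exact Or.inr (by simp only at hmono; linarith)
    · exact Or.inl (closedLoopField_apply_two_of_ne_one hM)
  refine hasDerivWithinAt_ne_zero_of_gap ht
    (fun s hs => (hx.hasDerivWithinAt_apply 2 hs.1).mono Icc_subset_Ici_self) hc hgap ?_
    (closedLoopField_apply_two_of_ne_one hne)
  have hmono := hx.monotoneOn_sq_apply_two self_mem_Ici ht ht
  rw [closedLoopField_apply_two_of_eq_one h0]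
  exact mul_ne_zero (signNonneg_ne_zero _) (by simp only at hmono; linarith)

lemma hasDerivWithinAt_Vq (hx : ClosedLoopSol M₁ (Kfb M₁) x) {S : Set ℝ} (hS : S ⊆ Ici 0)
    (htS : t ∈ S) (hM : M₁ (x t) = 1) (h1 : x t 2 ^ 2 < 1)
    (hsign : ∀ᶠ s in 𝓝[S] t, |x s 2| = signNonneg (x t 2) * x s 2) :
    HasDerivWithinAt (fun s => Vq (x s)) (-√(1 - x t 2 ^ 2)) S t := by
  have h := ((hx.hasDerivWithinAt_apply 2 (hS htS)).mono hS).arccos_abs hsign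
    (signNonneg_mul_self _).symm ((sq_lt_one_iff_abs_lt_one _).1 h1)
  rw [closedLoopField_apply_two_of_eq_one hM, ← mul_assoc, signNonneg_mul_signNonneg, one_mul,
    neg_div, Real.div_sqrt] at h
  simpa only [Vq_eq] using h

lemma hasDerivWithinAt_Vq_Ici (hx : ClosedLoopSol M₁ (Kfb M₁) x) (ht : 0 ≤ t)
    (hM : M₁ (x t) = 1) :
    HasDerivWithinAt (fun s => Vq (x s)) (-√(1 - x t 2 ^ 2)) (Ici t) t := by
  rcases (sq_le_one_of_mem_S2 (hx.1 t ht) 2).lt_or_eq with h1 | hpole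
  · refine hx.hasDerivWithinAt_Vq (Ici_subset_Ici.2 ht) self_mem_Ici hM h1 ?_
    have hf := ((hx.hasDerivWithinAt_apply 2 ht).mono (Ici_subset_Ici.2 ht)).const_mul
      (signNonneg (x t 2))
    rw [closedLoopField_apply_two_of_eq_one hM, ← mul_assoc, signNonneg_mul_signNonneg,
      one_mul] at hf
    filter_upwards [hf.eventually_nhdsGE_le (by linarith)] with s hs
    rw [signNonneg_mul_self] at hs
    rw [← abs_of_nonneg ((abs_nonneg _).trans hs), abs_mul, abs_signNonneg, one_mul]
  · -- `x₃²` is nondecreasing and `≤ 1`, so `x` stays at the pole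
    have hconst : ∀ s ∈ Ici t, Vq (x s) = 0 := fun s hs =>
      Vq_eq_zero_of_sq_eq_one <| le_antisymm (sq_le_one_of_mem_S2 (hx.1 s (ht.trans hs)) 2)
        (hpole ▸ hx.monotoneOn_sq_apply_two ht (ht.trans hs) hs)
    rw [hpole, sub_self, Real.sqrt_zero, neg_zero]
    exact (hasDerivWithinAt_const t _ 0).congr hconst (hconst t self_mem_Ici)

lemma hasDerivWithinAt_integral (hx : ClosedLoopSol M₁ (Kfb M₁) x) (ht : 0 ≤ t) :
    HasDerivWithinAt (fun u => ∫ s in (0 : ℝ)..u, √(1 - x s 2 ^ 2)) (√(1 - x t 2 ^ 2))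
      (Ici 0) t :=
  ((continuousOn_const.sub ((hx.continuousOn_apply 2).pow 2)).sqrt).hasDerivWithinAt_integral_Ici
    ht

theorem Vq_eq_sub_integral (hx : ClosedLoopSol M₁ (Kfb M₁) x)
    (hall : ∀ s, 0 ≤ s → M₁ (x s) = 1) (ht : 0 ≤ t) :
    Vq (x t) = Vq (x 0) - ∫ s in (0 : ℝ)..t, √(1 - x s 2 ^ 2) := by
  have hVq : ContinuousOn (fun s => Vq (x s)) (Ici 0) := by
    simp only [Vq_eq]
    exact Real.continuous_arccos.comp_continuousOn (hx.continuousOn_apply 2).abs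
  have hconst := constant_of_has_deriv_right_zero
    ((hVq.add fun s hs => (hx.hasDerivWithinAt_integral hs).continuousWithinAt).mono
      Icc_subset_Ici_self)
    (fun s hs => ((hx.hasDerivWithinAt_Vq_Ici hs.1 (hall s hs.1)).add
      ((hx.hasDerivWithinAt_integral hs.1).mono (Ici_subset_Ici.2 hs.1))).congr_deriv
        (neg_add_cancel _))
    t ⟨ht, le_rfl⟩
  simp only [Pi.add_apply, intervalIntegral.integral_same, add_zero] at hconst
  linarith

lemma exists_hasDerivWithinAt_Vr_nonpos (hx : ClosedLoopSol M₁ (Kfb M₁) x) (ht : 0 ≤ t)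
    (hM : M₁ (x t) = 1) (h1 : x t 1 ≠ 0) (h1' : x t 1 ^ 2 < 1) :
    ∃ d ≤ 0, HasDerivWithinAt (fun s => Vr (x s)) d (Ici 0) t := by
  have h := (hx.hasDerivWithinAt_apply 1 ht).arccos_abs
    (eventually_abs_eq_signNonneg_mul (hx.continuousOn_apply 1 t ht) h1)
    (signNonneg_mul_self _).symm ((sq_lt_one_iff_abs_lt_one _).1 h1')
  refine ⟨_, ?_, by simpa only [Vr_eq] using h.const_sub Real.pi⟩
  rw [closedLoopField_apply_one_of_eq_one hM, neg_div, neg_neg, mul_neg, ← mul_assoc,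
    mul_comm _ |x t 2|, mul_assoc, signNonneg_mul_self]
  exact div_nonpos_of_nonpos_of_nonneg
    (neg_nonpos.2 (mul_nonneg (abs_nonneg _) (abs_nonneg _))) (Real.sqrt_nonneg _)

lemma Vr_le (hx : ClosedLoopSol M₁ (Kfb M₁) x) (hall : ∀ s, 0 ≤ s → M₁ (x s) = 1)
    (ht : 0 ≤ t) : Vr (x t) ≤ Vr (x 0) := by
  rw [Vr_eq, Vr_eq]
  exact sub_le_sub_left (Real.arccos_le_arccos
    (sq_le_sq.1 (hx.antitoneOn_sq_apply_one hall self_mem_Ici ht ht))) _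

theorem exists_hasDerivWithinAt_Vlyap_le (hx : ClosedLoopSol M₁ (Kfb M₁) x) (ht : 0 ≤ t)
    (h1 : x t 1 ≠ 0) (h2 : x t 2 ≠ 0) (hM : M₁ (x t) = 1) :
    ∃ d, HasDerivWithinAt (fun s => Vlyap (x s)) d (Ici 0) t ∧ d ≤ -√(1 - x t 2 ^ 2) := by
  have hsum := sum_sq_of_mem_S2 (hx.1 t ht)
  have hq := hx.hasDerivWithinAt_Vq subset_rfl ht hM
    (by nlinarith [sq_nonneg (x t 0), pow_pos (abs_pos.2 h1) 2, sq_abs (x t 1)])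
    (eventually_abs_eq_signNonneg_mul (hx.continuousOn_apply 2 t ht) h2)
  obtain ⟨d, hd, hr⟩ := hx.exists_hasDerivWithinAt_Vr_nonpos ht hM h1
    (by nlinarith [sq_nonneg (x t 0), pow_pos (abs_pos.2 h2) 2, sq_abs (x t 2)])
  refine ⟨_, hq.mul (hr.const_add 1), ?_⟩
  nlinarith [mul_nonneg (Real.sqrt_nonneg (1 - x t 2 ^ 2)) (Vr_nonneg (x t)),
    mul_nonpos_of_nonneg_of_nonpos (Vq_nonneg (x t)) hd]

theorem hasDerivWithinAt_Vlyap_of_apply_one_eq_zero (hM₁ : M1Hyp M₁)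
    (hx : ClosedLoopSol M₁ (Kfb M₁) x) (h1 : ∀ s, 0 ≤ s → x s 1 = 0) (ht : 0 ≤ t) :
    HasDerivWithinAt (fun s => Vlyap (x s)) (-(1 + Real.pi / 2) * √(1 - x t 2 ^ 2)) (Ici 0) t := by
  have hall s (hs : 0 ≤ s) : M₁ (x s) = 1 := hM₁.eq_one_of_apply_one_eq_zero (hx.1 s hs) (h1 s hs)
  have hV : ∀ s ∈ Ici (0 : ℝ), Vlyap (x s) =
      (Vq (x 0) - ∫ u in (0 : ℝ)..s, √(1 - x u 2 ^ 2)) * (1 + Real.pi / 2) := fun s hs => by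
    rw [Vlyap, hx.Vq_eq_sub_integral hall hs, Vr_eq, h1 s hs, abs_zero, Real.arccos_zero]
    ring
  exact ((((hx.hasDerivWithinAt_integral ht).const_sub _).mul_const _).congr hV
    (hV t ht)).congr_deriv (by ring)

theorem Vlyap_sub_le_neg_integral (hM₁ : M1Hyp M₁) (hx : ClosedLoopSol M₁ (Kfb M₁) x)
    (h0 : M₁ (x 0) = 1) (ht : 0 ≤ t) :
    Vlyap (x t) - Vlyap (x 0) ≤ -∫ s in (0 : ℝ)..t, √(1 - x s 2 ^ 2) := by
  have hall s (hs : 0 ≤ s) : M₁ (x s) = 1 := hx.M₁_eq_one hM₁ h0 hs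
  have hI : 0 ≤ ∫ s in (0 : ℝ)..t, √(1 - x s 2 ^ 2) :=
    intervalIntegral.integral_nonneg ht fun _ _ => Real.sqrt_nonneg _
  rw [Vlyap, Vlyap, hx.Vq_eq_sub_integral hall ht]
  nlinarith [mul_nonneg (Vq_nonneg (x 0)) (sub_nonneg.2 (hx.Vr_le hall ht)),
    mul_nonneg hI (Vr_nonneg (x t))]

end ClosedLoopSol

/-- **Lyapunov decay along closed-loop trajectories in `M₁⁻¹(1)`.**
Along any classical closed-loop trajectory for the feedback `K`:
at every time `t ≥ 0` where `x₂ ≠ 0`, `x₃ ≠ 0`, `M₁(x) = 1` and `x ∉ {±q}`,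
`d/dt V(x(t)) ≤ -√(1-(x⬝q)²)`; along trajectories lying in `{x₂ = 0, x₃ ≠ 0}`,
`d/dt V(x(t)) = -(1+π/2)√(1-x₃²)`; and every closed-loop trajectory starting in
`M₁⁻¹(1)` satisfies `V(x(t)) - V(x(0)) ≤ -∫₀ᵗ √(1-x₃(s)²) ds`. -/
theorem lyapunov_decay_on_M1_eq_one (M₁ : E3 → ℝ) (hM₁ : M1Hyp M₁)
    (x : ℝ → E3) (hx : ClosedLoopSol M₁ (Kfb M₁) x) :
    (∀ t, 0 ≤ t → x t 1 ≠ 0 → x t 2 ≠ 0 → M₁ (x t) = 1 → x t ∉ attrA →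
      ∃ d : ℝ, HasDerivWithinAt (fun s => Vlyap (x s)) d (Ici 0) t ∧
        d ≤ -Real.sqrt (1 - (inner ℝ (x t) qv : ℝ) ^ 2)) ∧
    ((∀ t, 0 ≤ t → x t 1 = 0 ∧ x t 2 ≠ 0) →
      ∀ t, 0 ≤ t →
        HasDerivWithinAt (fun s => Vlyap (x s))
          (-(1 + Real.pi / 2) * Real.sqrt (1 - (x t 2) ^ 2)) (Ici 0) t) ∧
    (M₁ (x 0) = 1 →
      ∀ t, 0 ≤ t →
        Vlyap (x t) - Vlyap (x 0) ≤ -∫ s in (0 : ℝ)..t, Real.sqrt (1 - (x s 2) ^ 2)) := by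
  refine ⟨fun t ht h1 h2 hM _ => ?_, fun h12 t ht => ?_, fun h0 t ht => ?_⟩
  · rw [inner_qv]
    exact hx.exists_hasDerivWithinAt_Vlyap_le ht h1 h2 hM
  · exact hx.hasDerivWithinAt_Vlyap_of_apply_one_eq_zero hM₁ (fun s hs => (h12 s hs).1) ht
  · exact hx.Vlyap_sub_le_neg_integral hM₁ h0 ht
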